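/- Let n be a positive integer with prime factorization n = ∏_{i=1}^{s} p_i^{k_i}, let t and x be positive integers, and let 1 ≤ j ≤ s. Then (σ_x(n)+t)/n^x < I(x, p_j·n) if and only if p_j^x < (1/t)·σ_x(n/p_j^{k_j}). -/

import Mathlib

open Finset Nat

/-- Sum of x-th powers of divisors. -/
def sigmaX (x n : ℕ) : ℕ := ∑ d ∈ n.divisors, d ^ x

/-- The x-th abundancy index as a rational number. -/
def Iq (x n : ℕ) : ℚ := (sigmaX x n : ℚ) / (n : ℚ) ^ x

/-!
Write `n = q ^ K * m` with `q = p_j`, `K = k_j` and `q ∤ m`. Multiplicativity of `σ_x` and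
`σ_x(q ^ (K + 1)) = q ^ x σ_x(q ^ K) + 1` give `σ_x(q n) = q ^ x σ_x(n) + σ_x(m)`, that is
`I(x, q n) = σ_x(n) / n ^ x + σ_x(m) / (q n) ^ x`. Both sides of the equivalence thus
reduce to `t q ^ x < σ_x(m)`.
-/

open ArithmeticFunction
open scoped ArithmeticFunction.sigma

theorem sigmaX_eq_sigma (x n : ℕ) : sigmaX x n = σ x n := by
  rw [sigma_apply]
  rfl

theorem sigma_prime_pow_succ (x : ℕ) {q : ℕ} (hq : q.Prime) (K : ℕ) :
    σ x (q ^ (K + 1)) = q ^ x * σ x (q ^ K) + 1 := by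
  rw [sigma_apply_prime_pow hq, sigma_apply_prime_pow hq, sum_range_succ', mul_sum]
  simp only [add_mul, one_mul, zero_mul, pow_add, pow_zero, mul_comm _ (q ^ x)]

theorem sigmaX_prime_mul_pow_mul (x : ℕ) {q m : ℕ} (hq : q.Prime) (hqm : q.Coprime m)
    (K : ℕ) : sigmaX x (q * (q ^ K * m)) = q ^ x * sigmaX x (q ^ K * m) + sigmaX x m := by
  have hmul (a : ℕ) : σ x (q ^ a * m) = σ x (q ^ a) * σ x m :=
    isMultiplicative_sigma.map_mul_of_coprime (hqm.pow_left a)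
  simp only [sigmaX_eq_sigma]
  rw [← mul_assoc, ← pow_succ', hmul, hmul, sigma_prime_pow_succ x hq]
  ring

theorem Iq_prime_mul_pow_mul (x : ℕ) {q m : ℕ} (hq : q.Prime) (hqm : q.Coprime m) (K : ℕ) :
    Iq x (q * (q ^ K * m)) =
      Iq x (q ^ K * m) + sigmaX x m / ((q : ℚ) ^ x * ((q ^ K * m : ℕ) : ℚ) ^ x) := by
  have hq0 : (q : ℚ) ^ x ≠ 0 := pow_ne_zero _ (Nat.cast_ne_zero.mpr hq.ne_zero)
  rw [Iq, Iq, sigmaX_prime_mul_pow_mul x hq hqm, Nat.cast_mul (q : ℕ), mul_pow]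
  push_cast
  rw [add_div, mul_div_mul_left _ _ hq0]

theorem add_div_lt_add_div_mul_iff {α : Type*} [Field α] [LinearOrder α] [IsStrictOrderedRing α]
    {a b t Q N : α} (ht : 0 < t) (hQ : 0 < Q) (hN : 0 < N) :
    (a + t) / N < a / N + b / (Q * N) ↔ Q < 1 / t * b := by
  rw [add_div, add_lt_add_iff_left, one_div, inv_mul_eq_div, lt_div_iff₀ ht,
    div_lt_div_iff₀ hN (mul_pos hQ hN), ← mul_assoc, mul_lt_mul_iff_left₀ hN,
    mul_comm]

theorem coprime_prod_erase_of_injective {ι : Type*} [DecidableEq ι] {s : Finset ι}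
    {p : ι → ℕ} (hp : ∀ i, (p i).Prime) (hinj : Function.Injective p) (k : ι → ℕ) (j : ι) :
    (p j).Coprime (∏ i ∈ s.erase j, p i ^ k i) :=
  Nat.Coprime.prod_right fun i hi =>
    ((Nat.coprime_primes (hp j) (hp i)).mpr fun h => (mem_erase.mp hi).1 (hinj h).symm).pow_right _

theorem stmt_10_general (x t s : ℕ) (ht : 0 < t)
    (p : Fin s → ℕ) (k : Fin s → ℕ)
    (hp : ∀ i, (p i).Prime) (hinj : Function.Injective p)
    (n : ℕ) (hn : n = ∏ i, p i ^ k i) (j : Fin s) :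
    ((sigmaX x n + t : ℚ) / (n : ℚ) ^ x < Iq x (p j * n)) ↔
    ((p j : ℚ) ^ x < (1 / (t : ℚ)) * (sigmaX x (n / p j ^ k j) : ℚ)) := by
  set m := ∏ i ∈ univ.erase j, p i ^ k i
  have hnm : n = p j ^ k j * m :=
    hn ▸ (mul_prod_erase univ (fun i => p i ^ k i) (mem_univ j)).symm
  have hqpos : 0 < p j := (hp j).pos
  have hmpos : 0 < m := prod_pos fun i _ => pow_pos (hp i).pos _
  rw [hnm, Nat.mul_div_cancel_left _ (pow_pos hqpos _),
    Iq_prime_mul_pow_mul x (hp j) (coprime_prod_erase_of_injective hp hinj k j)]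
  exact add_div_lt_add_div_mul_iff (by exact_mod_cast ht) (by positivity) (by positivity)

theorem stmt_10 (x t s : ℕ) (hx : 0 < x) (ht : 0 < t) (hs : 0 < s)
    (p : Fin s → ℕ) (k : Fin s → ℕ)
    (hp : ∀ i, (p i).Prime) (hinj : Function.Injective p) (hk : ∀ i, 0 < k i)
    (n : ℕ) (hn : n = ∏ i, p i ^ k i) (j : Fin s) :
    ((sigmaX x n + t : ℚ) / (n : ℚ) ^ x < Iq x (p j * n)) ↔
    ((p j : ℚ) ^ x < (1 / (t : ℚ)) * (sigmaX x (n / p j ^ k j) : ℚ)) :=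
  stmt_10_general x t s ht p k hp hinj n hn j
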